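/- Let k₁₂ ≥ 1 be real, let s₁, s₂, p₁, p₂ be real with s₁ ≠ 0. Then the complex-valued function t ↦ (1-t)^{-i p₁ - i s₁ - 1/2} · t^{-i p₂ + i s₂ - 1/2} · ₂F₁(k₁₂-i s₁+i s₂, 1-k₁₂-i s₁+i s₂; 1+2i s₂; t) is integrable with respect to Lebesgue measure on the interval (0,1). (Convergence of the integral I₁(C,C,+) for the coupling of two continuous series to a positive discrete series; the integrand diverges only like t^{-1/2} at t = 0 and like (1-t)^{-1/2} at t = 1.) -/

import Mathlib

/-!
The parameters satisfy `Re (a + b) = Re c`, so the ratio `(a+n)(b+n)/((c+n)(n+1))` of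
consecutive coefficients of `₂F₁(a,b;c;·)` has modulus at most `(n+M+1)/(n+M+2)` for large `n`.
Hence the coefficients are `O(1/n)`, and comparing with the series of `-log(1-t)` gives
`|₂F₁(a,b;c;t)| ≤ C (-log(1-t))/t ≤ C_ε (1-t)^(-ε)` on `(0,1)`. The integrand is then dominated
by the Beta integrand `t^(-1/2) (1-t)^(-1/2-ε)`; measurability comes from continuity of `₂F₁` on
the unit disc, where it agrees with Mathlib's `ordinaryHypergeometric`.
-/

open Complex Filter Set MeasureTheory

noncomputable def hypTerm (a b c z : ℂ) (n : ℕ) : ℂ :=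
  (ascPochhammer ℂ n).eval a * (ascPochhammer ℂ n).eval b /
    ((ascPochhammer ℂ n).eval c * (n.factorial : ℂ)) * z ^ n

noncomputable def hyp (a b c z : ℂ) : ℂ := ∑' n, hypTerm a b c z n

lemma hyp_eq_ordinaryHypergeometric (a b c : ℂ) : hyp a b c = ordinaryHypergeometric a b c := by
  ext z
  rw [ordinaryHypergeometric_eq_tsum]
  exact tsum_congr fun n => by simp only [hypTerm, smul_eq_mul]; ring

lemma one_le_radius_ordinaryHypergeometricSeries (a : ℂ) {b c : ℂ} (hc : ∀ n : ℕ, (n : ℂ) ≠ -c) :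
    1 ≤ (ordinaryHypergeometricSeries ℂ a b c).radius := by
  by_cases ha : ∃ k : ℕ, (k : ℂ) = -a
  · obtain ⟨k, hk⟩ := ha
    rw [← neg_neg a, ← hk, ordinaryHypergeometric_radius_top_of_neg_nat₁]
    exact le_top
  by_cases hb : ∃ k : ℕ, (k : ℂ) = -b
  · obtain ⟨k, hk⟩ := hb
    rw [← neg_neg b, ← hk, ordinaryHypergeometric_radius_top_of_neg_nat₂]
    exact le_top
  push Not at ha hb
  rw [ordinaryHypergeometricSeries_radius_eq_one _ _ _ _ fun n => ⟨ha n, hb n, hc n⟩]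

lemma continuousOn_hyp (a : ℂ) {b c : ℂ} (hc : ∀ n : ℕ, (n : ℂ) ≠ -c) :
    ContinuousOn (hyp a b c) (Metric.ball 0 1) := by
  rw [hyp_eq_ordinaryHypergeometric, ← NNReal.coe_one, ← Metric.eball_coe]
  exact FormalMultilinearSeries.continuousOn.mono
    (Metric.eball_subset_eball (by simpa using one_le_radius_ordinaryHypergeometricSeries a hc))

lemma hypTerm_eq_mul_pow (a b c z : ℂ) (n : ℕ) : hypTerm a b c z n = hypTerm a b c 1 n * z ^ n := by
  simp [hypTerm]

lemma hypTerm_one_succ (a b c : ℂ) (n : ℕ) :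
    hypTerm a b c 1 (n + 1) = hypTerm a b c 1 n * ((a + n) * (b + n) / ((c + n) * (n + 1))) := by
  simp only [hypTerm, ascPochhammer_succ_eval, Nat.factorial_succ, Nat.cast_mul, Nat.cast_succ,
    one_pow, mul_one, div_eq_mul_inv, mul_inv]
  ring

lemma norm_add_mul_norm_add_le (a b : ℂ) (x : ℝ) :
    ‖a + x‖ * ‖b + x‖ ≤ x ^ 2 + (a.re + b.re) * x + (‖a‖ ^ 2 + ‖b‖ ^ 2) / 2 := by
  have hsq (z : ℂ) : ‖z + x‖ ^ 2 = ‖z‖ ^ 2 + 2 * z.re * x + x ^ 2 := by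
    simp only [Complex.sq_norm, Complex.normSq_apply, add_re, add_im, ofReal_re, ofReal_im]
    ring
  nlinarith [two_mul_le_add_sq ‖a + x‖ ‖b + x‖, hsq a, hsq b]

lemma neg_log_one_sub_le {t ε : ℝ} (ht0 : 0 ≤ t) (ht1 : t < 1) (hε : 0 < ε) (hε1 : ε ≤ 1) :
    -Real.log (1 - t) ≤ t * (1 - t) ^ (-ε) / ε := by
  have hu : 0 < 1 - t := by linarith
  have hlog : ε * -Real.log (1 - t) ≤ (1 - t) ^ (-ε) - 1 := by
    rw [mul_neg, ← neg_mul, ← Real.log_rpow hu]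
    exact Real.log_le_sub_one_of_pos (Real.rpow_pos_of_pos hu _)
  have hpow : (1 - t) ^ (1 - ε) ≤ 1 := Real.rpow_le_one hu.le (by linarith) (by linarith)
  rw [show 1 - ε = 1 + -ε by ring, Real.rpow_add hu, Real.rpow_one] at hpow
  rw [le_div_iff₀ hε]
  linarith

lemma integrableOn_rpow_mul_one_sub_rpow {u v : ℝ} (hu : -1 < u) (hv : -1 < v) :
    IntegrableOn (fun t : ℝ => t ^ u * (1 - t) ^ v) (Ioo 0 1) := by
  have hbeta := (Complex.betaIntegral_convergent (u := u + 1) (v := v + 1)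
    (by simp only [add_re, ofReal_re, one_re]; linarith)
    (by simp only [add_re, ofReal_re, one_re]; linarith)).norm
  rw [intervalIntegrable_iff_integrableOn_Ioo_of_le zero_le_one] at hbeta
  refine hbeta.congr_fun (fun t ht => ?_) measurableSet_Ioo
  have h1 : (1 : ℂ) - t = ((1 - t : ℝ) : ℂ) := by push_cast; ring
  simp only [norm_mul, h1, Complex.norm_cpow_eq_rpow_re_of_pos ht.1,
    Complex.norm_cpow_eq_rpow_re_of_pos (sub_pos.2 ht.2)]
  simp

lemma norm_hypTerm_one_succ_mul_le {a b c : ℂ} {M : ℝ} (hab : a.re + b.re ≤ c.re) (hc : 0 < c.re)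
    (hM : (‖a‖ ^ 2 + ‖b‖ ^ 2) / 2 ≤ M) {n : ℕ} (hn : M * (M + 2) ≤ n) :
    ‖hypTerm a b c 1 (n + 1)‖ * (n + 1 + (M + 1)) ≤ ‖hypTerm a b c 1 n‖ * (n + (M + 1)) := by
  have hM0 : 0 ≤ M := le_trans (by positivity) hM
  have hcn : n + c.re ≤ ‖c + n‖ := by simpa [add_comm] using Complex.re_le_norm (c + n)
  have hcn0 : 0 < ‖c + n‖ := by linarith [(n.cast_nonneg : (0 : ℝ) ≤ n)]
  have hn1 : ‖(n : ℂ) + 1‖ = n + 1 := by exact_mod_cast Complex.norm_natCast (n + 1)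
  have hratio : ‖a + n‖ * ‖b + n‖ * (n + 1 + (M + 1)) ≤ (n + (M + 1)) * (‖c + n‖ * (n + 1)) :=
    calc ‖a + n‖ * ‖b + n‖ * (n + 1 + (M + 1))
        ≤ (n ^ 2 + c.re * n + M) * (n + 1 + (M + 1)) := by
          gcongr
          have h := norm_add_mul_norm_add_le a b n
          rw [Complex.ofReal_natCast] at h
          linarith [mul_le_mul_of_nonneg_right hab (n.cast_nonneg : (0 : ℝ) ≤ n)]
      -- the two sides differ by `(n - M (M + 2)) + (M + 1) Re c`
      _ ≤ (n + (M + 1)) * ((n + c.re) * (n + 1)) := by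
          nlinarith [mul_pos (by linarith : 0 < M + 1) hc]
      _ ≤ (n + (M + 1)) * (‖c + n‖ * (n + 1)) := by gcongr
  rw [hypTerm_one_succ, norm_mul, norm_div, norm_mul, norm_mul, hn1, mul_assoc]
  refine mul_le_mul_of_nonneg_left ?_ (norm_nonneg _)
  rw [div_mul_eq_mul_div, div_le_iff₀ (mul_pos (by positivity) (by positivity))]
  exact hratio

theorem exists_norm_hypTerm_one_le {a b c : ℂ} (hab : a.re + b.re ≤ c.re) (hc : 0 < c.re) :
    ∃ C, ∀ n : ℕ, ‖hypTerm a b c 1 n‖ ≤ C / (n + 1) := by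
  set M := (‖a‖ ^ 2 + ‖b‖ ^ 2) / 2 with hM
  set N := ⌈M * (M + 2)⌉₊
  have hdecr : ∀ n ≥ N,
      ‖hypTerm a b c 1 n‖ * (n + (M + 1)) ≤ ‖hypTerm a b c 1 N‖ * (N + (M + 1)) := by
    intro n hn
    induction n, hn using Nat.le_induction with
    | base => exact le_rfl
    | succ n hn ih =>
      have := norm_hypTerm_one_succ_mul_le hab hc hM.ge
        ((Nat.le_ceil _).trans (by exact_mod_cast hn))
      push_cast
      linarith
  obtain ⟨C, hC⟩ :=
    (isBoundedUnder_of_eventually_le (eventually_atTop.2 ⟨N, hdecr⟩)).bddAbove_range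
  refine ⟨C, fun n => ?_⟩
  rw [le_div_iff₀ (by positivity)]
  calc ‖hypTerm a b c 1 n‖ * (n + 1) ≤ ‖hypTerm a b c 1 n‖ * (n + (M + 1)) := by
        gcongr; linarith [show 0 ≤ M by positivity]
    _ ≤ C := hC (mem_range_self n)

lemma norm_hyp_le_neg_log {a b c : ℂ} {C : ℝ} (hC : ∀ n : ℕ, ‖hypTerm a b c 1 n‖ ≤ C / (n + 1))
    {z : ℂ} (hz0 : z ≠ 0) (hz1 : ‖z‖ < 1) :
    ‖hyp a b c z‖ ≤ C * -Real.log (1 - ‖z‖) / ‖z‖ := by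
  have hr : 0 < ‖z‖ := norm_pos_iff.2 hz0
  have hlog : HasSum (fun n : ℕ => C / (n + 1) * ‖z‖ ^ n) (C * -Real.log (1 - ‖z‖) / ‖z‖) := by
    rw [mul_div_right_comm]
    refine ((Real.hasSum_pow_div_log_of_abs_lt_one (x := ‖z‖)
      (by rwa [abs_of_nonneg (norm_nonneg z)])).mul_left (C / ‖z‖)).congr_fun fun n => ?_
    field_simp
    ring
  refine tsum_of_norm_bounded hlog fun n => ?_
  rw [hypTerm_eq_mul_pow, norm_mul, norm_pow]
  exact mul_le_mul_of_nonneg_right (hC n) (by positivity)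

lemma norm_hyp_le_rpow {a b c : ℂ} {C : ℝ} (hC : ∀ n : ℕ, ‖hypTerm a b c 1 n‖ ≤ C / (n + 1))
    {t ε : ℝ} (ht0 : 0 < t) (ht1 : t < 1) (hε : 0 < ε) (hε1 : ε ≤ 1) :
    ‖hyp a b c t‖ ≤ C / ε * (1 - t) ^ (-ε) := by
  have hC0 : 0 ≤ C := by simpa using (norm_nonneg _).trans (hC 0)
  have hnorm : ‖(t : ℂ)‖ = t := by simp [ht0.le]
  calc ‖hyp a b c t‖ ≤ C * -Real.log (1 - t) / t := by
        simpa only [hnorm] using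
          norm_hyp_le_neg_log hC (ofReal_ne_zero.2 ht0.ne') (hnorm.symm ▸ ht1)
    _ ≤ C * (t * (1 - t) ^ (-ε) / ε) / t := by
        gcongr
        exact neg_log_one_sub_le ht0.le ht1 hε hε1
    _ = C / ε * (1 - t) ^ (-ε) := by field_simp

theorem integrableOn_cpow_mul_cpow_mul_hyp {a b c w₁ w₂ : ℂ} (hab : a.re + b.re ≤ c.re)
    (hc : 0 < c.re) (hw₁ : -1 < w₁.re) (hw₂ : -1 < w₂.re) :
    IntegrableOn (fun t : ℝ => ((1 - t : ℝ) : ℂ) ^ w₁ * ((t : ℝ) : ℂ) ^ w₂ * hyp a b c t)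
      (Ioo 0 1) := by
  obtain ⟨C, hC⟩ := exists_norm_hypTerm_one_le hab hc
  set ε := min 1 ((w₁.re + 1) / 2)
  have hε : 0 < ε := lt_min one_pos (by linarith)
  have hw₁ε : -1 < w₁.re - ε := by linarith [min_le_right 1 ((w₁.re + 1) / 2)]
  have hcont : ContinuousOn
      (fun t : ℝ => ((1 - t : ℝ) : ℂ) ^ w₁ * ((t : ℝ) : ℂ) ^ w₂ * hyp a b c t) (Ioo 0 1) := by
    have hc' (n : ℕ) : (n : ℂ) ≠ -c := fun h => by
      have := congrArg re h
      simp only [natCast_re, neg_re] at this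
      linarith [(n.cast_nonneg : (0 : ℝ) ≤ n)]
    refine ContinuousOn.mul (ContinuousOn.mul ?_ ?_) ?_
    · exact fun t ht => (ContinuousAt.cpow (f := fun t : ℝ => ((1 - t : ℝ) : ℂ)) (by fun_prop)
        continuousAt_const (ofReal_mem_slitPlane.2 (sub_pos.2 ht.2))).continuousWithinAt
    · exact fun t ht => (ContinuousAt.cpow (by fun_prop) continuousAt_const
        (ofReal_mem_slitPlane.2 ht.1)).continuousWithinAt
    · refine (continuousOn_hyp a hc').comp continuous_ofReal.continuousOn fun t ht => ?_
      simp [abs_of_pos ht.1, ht.2]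
  refine ((integrableOn_rpow_mul_one_sub_rpow hw₂ hw₁ε).const_mul (C / ε)).mono'
    (hcont.aestronglyMeasurable measurableSet_Ioo) ?_
  refine (ae_restrict_iff' measurableSet_Ioo).2 (ae_of_all _ fun t ht => ?_)
  have hu : 0 < 1 - t := sub_pos.2 ht.2
  rw [norm_mul, norm_mul, norm_cpow_eq_rpow_re_of_pos hu, norm_cpow_eq_rpow_re_of_pos ht.1]
  calc (1 - t) ^ w₁.re * t ^ w₂.re * ‖hyp a b c t‖
      ≤ (1 - t) ^ w₁.re * t ^ w₂.re * (C / ε * (1 - t) ^ (-ε)) := by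
        refine mul_le_mul_of_nonneg_left (norm_hyp_le_rpow hC ht.1 ht.2 hε (min_le_left _ _)) ?_
        exact mul_nonneg (Real.rpow_nonneg hu.le _) (Real.rpow_nonneg ht.1.le _)
    _ = C / ε * (t ^ w₂.re * (1 - t) ^ (w₁.re - ε)) := by
        rw [Real.rpow_sub hu, Real.rpow_neg hu.le]
        ring

theorem integral_CCP_I1_integrable_general (k₁₂ s₁ s₂ p₁ p₂ : ℝ) :
    IntegrableOn (fun t : ℝ =>
        ((1 - t : ℝ) : ℂ) ^ (-(I * (p₁ : ℂ)) - I * (s₁ : ℂ) - 1 / 2) *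
          ((t : ℝ) : ℂ) ^ (-(I * (p₂ : ℂ)) + I * (s₂ : ℂ) - 1 / 2) *
          hyp ((k₁₂ : ℂ) - I * (s₁ : ℂ) + I * (s₂ : ℂ))
            (1 - k₁₂ - I * (s₁ : ℂ) + I * (s₂ : ℂ)) (1 + 2 * I * (s₂ : ℂ)) t)
      (Ioo 0 1) volume :=
  integrableOn_cpow_mul_cpow_mul_hyp (by simp) (by simp) (by norm_num) (by norm_num)

/-- Convergence of the integral `I₁(C,C,+)` for the coupling of two continuous series to
a positive discrete series: the integrand is integrable on `(0,1)`. -/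
theorem integral_CCP_I1_integrable (k₁₂ s₁ s₂ p₁ p₂ : ℝ)
    (h12 : 1 ≤ k₁₂) (hs₁ : s₁ ≠ 0) :
    IntegrableOn (fun t : ℝ =>
        ((1 - t : ℝ) : ℂ) ^ (-(I * (p₁ : ℂ)) - I * (s₁ : ℂ) - 1 / 2) *
          ((t : ℝ) : ℂ) ^ (-(I * (p₂ : ℂ)) + I * (s₂ : ℂ) - 1 / 2) *
          hyp ((k₁₂ : ℂ) - I * (s₁ : ℂ) + I * (s₂ : ℂ))
            (1 - k₁₂ - I * (s₁ : ℂ) + I * (s₂ : ℂ)) (1 + 2 * I * (s₂ : ℂ)) t)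
      (Ioo 0 1) volume :=
  integral_CCP_I1_integrable_general k₁₂ s₁ s₂ p₁ p₂
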